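/- Let n ≥ 1 be a natural number, let OPT, ε, C₁, C₂, z₁, z₂, a, b, k₁, k₂, k' be nonnegative reals with k₁ ≤ n, a + b = 1, a·k₁ + b·k₂ = k', 0 ≤ z₂ − z₁ ≤ ε·OPT/(3n), C₁ + 3k₁·z₁ ≤ 3(OPT + k'·z₁), and C₂ + 3k₂·z₂ ≤ 3(OPT + k'·z₂). Then a·C₁ + b·C₂ ≤ (3 + ε)·OPT. -/

import Mathlib

/-!
Averaging the two Lagrangian guarantees with weights `a` and `b` and using
`k' = a k₁ + b k₂` leaves, beyond `3·OPT`, only the cross term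
`3 a b (k₁ - k₂)(z₂ - z₁)`. Since `a b ≤ 1`, `k₁ - k₂ ≤ k₁ ≤ n` and
`z₂ - z₁ ≤ ε·OPT/(3n)`, that term is at most `ε·OPT`.
-/

theorem mul_add_mul_le_of_lagrangian_bounds {c OPT C₁ C₂ z₁ z₂ a b k₁ k₂ k' : ℝ}
    (ha : 0 ≤ a) (hb : 0 ≤ b) (hab : a + b = 1) (habk : a * k₁ + b * k₂ = k')
    (h1 : C₁ + c * k₁ * z₁ ≤ c * (OPT + k' * z₁))
    (h2 : C₂ + c * k₂ * z₂ ≤ c * (OPT + k' * z₂)) :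
    a * C₁ + b * C₂ ≤ c * OPT + c * (a * b * (k₁ - k₂) * (z₂ - z₁)) := by
  obtain rfl : b = 1 - a := by linarith
  subst habk
  linear_combination a * h1 + (1 - a) * h2

theorem mul_mul_sub_le_of_add_eq_one {a b k₁ k₂ N : ℝ}
    (ha : 0 ≤ a) (hb : 0 ≤ b) (hab : a + b = 1)
    (hk₂ : 0 ≤ k₂) (hk₁N : k₁ ≤ N) (hN : 0 ≤ N) :
    a * b * (k₁ - k₂) ≤ N := by
  rcases le_or_gt k₁ k₂ with hle | hlt
  · exact (mul_nonpos_of_nonneg_of_nonpos (mul_nonneg ha hb) (by linarith)).trans hN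
  · have hab1 : a * b ≤ 1 := mul_le_one₀ (by linarith) hb (by linarith)
    calc a * b * (k₁ - k₂) ≤ 1 * (k₁ - k₂) := by gcongr
      _ ≤ N := by linarith

theorem stmt_1 (n : ℕ) (hn : 1 ≤ n)
    (OPT ε C₁ C₂ z₁ z₂ a b k₁ k₂ k' : ℝ)
    (ha : 0 ≤ a) (hb : 0 ≤ b)
    (hk₂ : 0 ≤ k₂)
    (hk₁n : k₁ ≤ (n : ℝ)) (hab : a + b = 1) (habk : a * k₁ + b * k₂ = k')
    (hz : 0 ≤ z₂ - z₁) (hδ : z₂ - z₁ ≤ ε * OPT / (3 * n))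
    (h1 : C₁ + 3 * k₁ * z₁ ≤ 3 * (OPT + k' * z₁))
    (h2 : C₂ + 3 * k₂ * z₂ ≤ 3 * (OPT + k' * z₂)) :
    a * C₁ + b * C₂ ≤ (3 + ε) * OPT := by
  have h3n : (0 : ℝ) < 3 * n := by positivity
  have hcross : a * b * (k₁ - k₂) ≤ n :=
    mul_mul_sub_le_of_add_eq_one ha hb hab hk₂ hk₁n n.cast_nonneg
  calc a * C₁ + b * C₂ ≤ 3 * OPT + 3 * (a * b * (k₁ - k₂) * (z₂ - z₁)) :=
        mul_add_mul_le_of_lagrangian_bounds ha hb hab habk h1 h2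
    _ ≤ 3 * OPT + 3 * n * (z₂ - z₁) := by
      linarith [mul_le_mul_of_nonneg_right hcross hz]
    _ ≤ 3 * OPT + ε * OPT := by linarith [(le_div_iff₀' h3n).mp hδ]
    _ = (3 + ε) * OPT := by ring
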